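/- Let b ≥ β > 0 and let f : 𝔻 → ℝ be defined by f(r·e^{iθ}) = (1/(r(1−r)^{b−β}))·sin(1/(1−r)^b) for 1/2 ≤ r < 1 and f(r·e^{iθ}) = 1 for 0 ≤ r < 1/2. Then there exists a constant C > 0 such that for every z = r·e^{iθ} ∈ 𝔻 with 1/2 ≤ r < 1 and every ζ ∈ B(z), one has |∫_{B(z,ζ)} f dA| ≤ C·(1−r)^{2+β}. -/

import Mathlib

open MeasureTheory Set

noncomputable section

/-- The normalized area measure on the plane: planar Lebesgue measure divided by `π`. -/
def dA : Measure ℂ := (ENNReal.ofReal Real.pi)⁻¹ • volume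

/-- The open unit disc `𝔻`. -/
def unitDisc : Set ℂ := {z : ℂ | ‖z‖ < 1}

/-- The argument `θ` of `z`, normalized to lie in `[0, 2π)`. -/
def theta (z : ℂ) : ℝ := toIcoMod Real.two_pi_pos 0 (Complex.arg z)

/-- The angle of `ζ`, normalized to lie in `[theta z, theta z + 2π)`;
for `ζ ∈ B(z)` this is the angle `θ̃ ∈ [θ, θ + π(1-r)]` of the paper's convention. -/
def angFrom (z ζ : ℂ) : ℝ := toIcoMod Real.two_pi_pos (theta z) (Complex.arg ζ)

/-- The polar rectangle `{ρ e^{iφ} : r₁ ≤ ρ ≤ r₂, φ₁ ≤ φ ≤ φ₂}`. -/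
def polarRect (r₁ r₂ φ₁ φ₂ : ℝ) : Set ℂ :=
  {w : ℂ | ∃ ρ φ : ℝ, r₁ ≤ ρ ∧ ρ ≤ r₂ ∧ φ₁ ≤ φ ∧ φ ≤ φ₂ ∧
    w = (ρ : ℂ) * Complex.exp ((φ : ℂ) * Complex.I)}

/-- The set `B(z)` for `z = r e^{iθ} ∈ 𝔻`. -/
def Bz (z : ℂ) : Set ℂ :=
  polarRect ‖z‖ (1 - (1 - ‖z‖) / 2) (theta z) (theta z + Real.pi * (1 - ‖z‖))

/-- The set `B(z, ζ)` for `ζ ∈ B(z)`. -/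
def Bzz (z ζ : ℂ) : Set ℂ := polarRect ‖z‖ ‖ζ‖ (theta z) (angFrom z ζ)

/-- The set `B(ζ₁, ζ₂)` for points `ζ₁ ≾ ζ₂` of `B(z)`. -/
def Bsub (z ζ₁ ζ₂ : ℂ) : Set ℂ := polarRect ‖ζ₁‖ ‖ζ₂‖ (angFrom z ζ₁) (angFrom z ζ₂)

/-- The relation `ζ₁ ≾ ζ₂` for points of `B(z)`: `ρ₁ ≤ ρ₂` and `φ₁ ≤ φ₂`. -/
def precSim (z ζ₁ ζ₂ : ℂ) : Prop := ‖ζ₁‖ ≤ ‖ζ₂‖ ∧ angFrom z ζ₁ ≤ angFrom z ζ₂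

/-- The average `f̂_K = (1/|K|) ∫_K f dA` of `f` over a set `K`. -/
def avgOn (f : ℂ → ℂ) (K : Set ℂ) : ℂ := ((dA K).toReal)⁻¹ • ∫ w in K, f w ∂dA

/-- The average function `f̂(z) = f̂_{B(z)}`. -/
def avg (f : ℂ → ℂ) (z : ℂ) : ℂ := avgOn f (Bz z)

/-- The quantity `(1/|B(z)|) |∫_{B(z,ζ)} (f(ξ) - f̂(z)) dA(ξ)|`. -/
def wQuot (f : ℂ → ℂ) (z ζ : ℂ) : ℝ :=
  ((dA (Bz z)).toReal)⁻¹ * ‖∫ ξ in Bzz z ζ, (f ξ - avg f z) ∂dA‖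

/-- The BWMO condition: `‖f‖_BWMO < ∞`. -/
def IsBWMO (f : ℂ → ℂ) : Prop := ∃ C : ℝ, ∀ z ∈ unitDisc, ∀ ζ ∈ Bz z, wQuot f z ζ ≤ C

/-- The BWMO seminorm `‖f‖_BWMO`. -/
def bwmoNorm (f : ℂ → ℂ) : ℝ :=
  sSup {c : ℝ | ∃ z ∈ unitDisc, ∃ ζ ∈ Bz z, c = wQuot f z ζ}

/-- The VWMO condition:
`(1/|B(z)|) sup_{ζ ∈ B(z)} |∫_{B(z,ζ)} (f - f̂(z)) dA| → 0` as `|z| → 1`. -/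
def IsVWMO (f : ℂ → ℂ) : Prop :=
  ∀ ε > (0:ℝ), ∃ r₀ < (1:ℝ), ∀ z ∈ unitDisc, r₀ ≤ ‖z‖ → ∀ ζ ∈ Bz z, wQuot f z ζ ≤ ε

/-- The Bergman-metric disc `D(z,1)` of radius `1` centered at `z`. -/
def Dball (z : ℂ) : Set ℂ :=
  {w : ℂ | ‖w‖ < 1 ∧ ‖(z - w) / (1 - (starRingEnd ℂ) w * z)‖ < Real.tanh 1}

/-- The hyperbolic average `f̂₁(z) = (1/|D(z,1)|) ∫_{D(z,1)} f dA` of a real-valued `f`. -/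
def avg1 (f : ℂ → ℝ) (z : ℂ) : ℝ := ((dA (Dball z)).toReal)⁻¹ * ∫ w in Dball z, f w ∂dA

/-- The mean oscillation `(1/|D(z,1)|) ∫_{D(z,1)} |f - f̂₁(z)| dA` of a real-valued `f`. -/
def meanOsc1 (f : ℂ → ℝ) (z : ℂ) : ℝ :=
  ((dA (Dball z)).toReal)⁻¹ * ∫ ξ in Dball z, |f ξ - avg1 f z| ∂dA

/-- The Berezin transform `f̃(z) = ∫_𝔻 f(w) |k_z(w)|² dA(w)`,
where `k_z(w) = (1-|z|²)/(1-w z̄)²`. -/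
def berezin (f : ℂ → ℂ) (z : ℂ) : ℂ :=
  ∫ w in unitDisc, f w * ((((1 - ‖z‖ ^ 2) ^ 2 / ‖1 - w * (starRingEnd ℂ) z‖ ^ 4 : ℝ)) : ℂ) ∂dA

/-- The example symbol of Section 4:
`f(r e^{iθ}) = (1/(r (1-r)^{b-β})) sin(1/(1-r)^b)` for `r ≥ 1/2`, and `1` for `r < 1/2`. -/
def fEx (b β : ℝ) (z : ℂ) : ℝ :=
  if ‖z‖ < 1 / 2 then 1
  else (1 / (‖z‖ * (1 - ‖z‖) ^ (b - β))) * Real.sin (1 / (1 - ‖z‖) ^ b)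

end

/-!
In polar coordinates `f` is radial, so `∫_{B(z,ζ)} f dA` is `(θ̃ - θ)/π ≤ 1 - r` times
`∫_r^{r̃} s f(s) ds = ∫_{1-r̃}^{1-r} sin(t^{-b}) t^{β-b} dt`. Since
`(t^{β+1} cos(t^{-b}))' = (β+1) t^β cos(t^{-b}) + b sin(t^{-b}) t^{β-b}`, integrating by parts
bounds the last integral by `(2/b) (1-r)^{β+1}` uniformly in `r̃`: the oscillation of
`sin(t^{-b})` compensates the growth of `t^{β-b}` near `0`.
-/

open MeasureTheory Set Real intervalIntegral

section Oscillatory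

variable (b β : ℝ)

theorem hasDerivAt_rpow_mul_cos_inv_rpow {t : ℝ} (ht : 0 < t) :
    HasDerivAt (fun t : ℝ => t ^ (β + 1) * cos (1 / t ^ b))
      ((β + 1) * t ^ β * cos (1 / t ^ b) + b * (sin (1 / t ^ b) * t ^ (β - b))) t := by
  have hpow : HasDerivAt (fun t : ℝ => t ^ (β + 1)) ((β + 1) * t ^ β) t := by
    simpa using hasDerivAt_rpow_const (x := t) (p := β + 1) (Or.inl ht.ne')
  have hinv : HasDerivAt (fun t : ℝ => 1 / t ^ b) (-b * t ^ (-b - 1)) t := by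
    refine (hasDerivAt_rpow_const (x := t) (p := -b) (Or.inl ht.ne')).congr_of_eventuallyEq ?_
    filter_upwards [eventually_gt_nhds ht] with x hx
    rw [rpow_neg hx.le, one_div]
  refine (hpow.mul hinv.cos).congr_deriv ?_
  rw [show t ^ (β - b) = t ^ (β + 1) * t ^ (-b - 1) by rw [← rpow_add ht]; ring_nf]
  ring

theorem continuousOn_sin_inv_rpow_mul_rpow :
    ContinuousOn (fun t : ℝ => sin (1 / t ^ b) * t ^ (β - b)) (Ioi 0) :=
  continuousOn_of_forall_continuousAt fun t (ht : 0 < t) => by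
    fun_prop (disch := first | positivity | exact Or.inl ht.ne')

theorem continuousOn_rpow_mul_cos_inv_rpow :
    ContinuousOn (fun t : ℝ => (β + 1) * t ^ β * cos (1 / t ^ b)) (Ioi 0) :=
  continuousOn_of_forall_continuousAt fun t (ht : 0 < t) => by
    fun_prop (disch := first | positivity | exact Or.inl ht.ne')

variable {a c : ℝ}

theorem mul_integral_sin_inv_rpow_mul_rpow (ha : 0 < a) (hac : a ≤ c) :
    b * ∫ t in a..c, sin (1 / t ^ b) * t ^ (β - b) =
      c ^ (β + 1) * cos (1 / c ^ b) - a ^ (β + 1) * cos (1 / a ^ b)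
        - ∫ t in a..c, (β + 1) * t ^ β * cos (1 / t ^ b) := by
  have hpos : uIcc a c ⊆ Ioi 0 := fun t ht => ha.trans_le (uIcc_of_le hac ▸ ht).1
  have hsin :=
    ((continuousOn_sin_inv_rpow_mul_rpow b β).mono hpos).intervalIntegrable (μ := volume)
  have hcos :=
    ((continuousOn_rpow_mul_cos_inv_rpow b β).mono hpos).intervalIntegrable (μ := volume)
  have hftc := integral_eq_sub_of_hasDerivAt
    (fun t ht => hasDerivAt_rpow_mul_cos_inv_rpow b β (hpos ht)) (hcos.add (hsin.const_mul b))
  rw [integral_add hcos (hsin.const_mul b), intervalIntegral.integral_const_mul] at hftc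
  linarith

theorem abs_integral_rpow_mul_cos_inv_rpow_le (hβ : -1 < β) (ha : 0 < a) (hac : a ≤ c) :
    |∫ t in a..c, (β + 1) * t ^ β * cos (1 / t ^ b)| ≤ c ^ (β + 1) - a ^ (β + 1) := by
  have hpos : uIcc a c ⊆ Ioi 0 := fun t ht => ha.trans_le (uIcc_of_le hac ▸ ht).1
  have hcos :=
    ((continuousOn_rpow_mul_cos_inv_rpow b β).mono hpos).intervalIntegrable (μ := volume)
  calc |∫ t in a..c, (β + 1) * t ^ β * cos (1 / t ^ b)|
      ≤ ∫ t in a..c, |(β + 1) * t ^ β * cos (1 / t ^ b)| := abs_integral_le_integral_abs hac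
    _ ≤ ∫ t in a..c, (β + 1) * t ^ β := by
        refine integral_mono_on hac hcos.abs
          ((intervalIntegral.intervalIntegrable_rpow' hβ).const_mul _) fun t ht => ?_
        have ht : 0 < t := ha.trans_le ht.1
        have hpos : 0 < (β + 1) * t ^ β := mul_pos (by linarith) (rpow_pos_of_pos ht β)
        rw [abs_mul, abs_of_pos hpos]
        exact mul_le_of_le_one_right hpos.le (abs_cos_le_one _)
    _ = c ^ (β + 1) - a ^ (β + 1) := by
        rw [intervalIntegral.integral_const_mul, integral_rpow (Or.inl hβ)]
        field_simp [show β + 1 ≠ 0 by linarith]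

theorem abs_integral_sin_inv_rpow_mul_rpow_le (hb : 0 < b) (hβ : -1 < β) (ha : 0 < a)
    (hac : a ≤ c) :
    |∫ t in a..c, sin (1 / t ^ b) * t ^ (β - b)| ≤ 2 / b * c ^ (β + 1) := by
  have hcos := abs_le.mp (abs_integral_rpow_mul_cos_inv_rpow_le b β hβ ha hac)
  have hbI : |b * ∫ t in a..c, sin (1 / t ^ b) * t ^ (β - b)| ≤ 2 * c ^ (β + 1) := by
    rw [mul_integral_sin_inv_rpow_mul_rpow b β ha hac, abs_le]
    have hapos := rpow_pos_of_pos ha (β + 1)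
    have hcpos := rpow_pos_of_pos (ha.trans_le hac) (β + 1)
    constructor <;> nlinarith [neg_one_le_cos (1 / a ^ b), cos_le_one (1 / a ^ b),
      neg_one_le_cos (1 / c ^ b), cos_le_one (1 / c ^ b)]
  rw [abs_mul, abs_of_pos hb] at hbI
  rw [div_mul_eq_mul_div, le_div_iff₀ hb]
  linarith

end Oscillatory

theorem polarRect_eq_image (r₁ r₂ φ₁ φ₂ : ℝ) :
    polarRect r₁ r₂ φ₁ φ₂ =
      (fun p : ℝ × ℝ => (p.1 : ℂ) * Complex.exp (p.2 * Complex.I)) '' Icc r₁ r₂ ×ˢ Icc φ₁ φ₂ := by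
  ext w
  constructor
  · rintro ⟨ρ, φ, h₁, h₂, h₃, h₄, rfl⟩
    exact ⟨(ρ, φ), ⟨⟨h₁, h₂⟩, h₃, h₄⟩, rfl⟩
  · rintro ⟨⟨ρ, φ⟩, ⟨⟨h₁, h₂⟩, h₃, h₄⟩, rfl⟩
    exact ⟨ρ, φ, h₁, h₂, h₃, h₄, rfl⟩

theorem measurableSet_polarRect (r₁ r₂ φ₁ φ₂ : ℝ) : MeasurableSet (polarRect r₁ r₂ φ₁ φ₂) := by
  rw [polarRect_eq_image]
  exact ((isCompact_Icc.prod isCompact_Icc).image (by fun_prop)).measurableSet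

theorem norm_ofReal_mul_exp_mul_I {ρ : ℝ} (hρ : 0 ≤ ρ) (φ : ℝ) :
    ‖(ρ : ℂ) * Complex.exp (φ * Complex.I)‖ = ρ := by
  rw [norm_mul, Complex.norm_real, norm_of_nonneg hρ, Complex.norm_exp_ofReal_mul_I, mul_one]

theorem polarCoord_symm_mem_polarRect_iff {r₁ r₂ φ₁ φ₂ : ℝ} (hr₁ : 0 ≤ r₁) (hφ₁ : -π < φ₁)
    (hφ₂ : φ₂ ≤ π) {p : ℝ × ℝ} (hp : p ∈ polarCoord.target) :
    Complex.polarCoord.symm p ∈ polarRect r₁ r₂ φ₁ φ₂ ↔ p ∈ Icc r₁ r₂ ×ˢ Icc φ₁ φ₂ := by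
  constructor
  · rintro ⟨ρ, φ, h₁, h₂, h₃, h₄, heq⟩
    have hp' := Complex.polarCoord.right_inv hp
    rw [Complex.polarCoord_apply, heq, norm_ofReal_mul_exp_mul_I (hr₁.trans h₁)] at hp'
    subst hp'
    have hρ : 0 < ρ := hp.1
    rw [Complex.arg_real_mul _ hρ, Complex.arg_exp_mul_I,
      (toIocMod_eq_self two_pi_pos).2 ⟨hφ₁.trans_le h₃, by linarith⟩]
    exact ⟨⟨h₁, h₂⟩, h₃, h₄⟩
  · rintro ⟨⟨h₁, h₂⟩, h₃, h₄⟩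
    refine ⟨p.1, p.2, h₁, h₂, h₃, h₄, ?_⟩
    rw [Complex.polarCoord_symm_apply, Complex.exp_mul_I]
    push_cast
    ring

theorem setIntegral_polarRect_comp_norm_of_neg_pi_lt (G : ℝ → ℝ) {r₁ r₂ φ₁ φ₂ : ℝ}
    (hr₁ : 0 < r₁) (hr : r₁ ≤ r₂) (hφ₁ : -π < φ₁) (hφ : φ₁ ≤ φ₂) (hφ₂ : φ₂ < π) :
    ∫ w in polarRect r₁ r₂ φ₁ φ₂, G ‖w‖ = (φ₂ - φ₁) * ∫ ρ in r₁..r₂, ρ * G ρ := by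
  set S := polarRect r₁ r₂ φ₁ φ₂
  set R : Set (ℝ × ℝ) := Icc r₁ r₂ ×ˢ Icc φ₁ φ₂
  have hRS : ∀ p ∈ polarCoord.target, Complex.polarCoord.symm p ∈ S ↔ p ∈ R :=
    fun p => polarCoord_symm_mem_polarRect_iff hr₁.le hφ₁ hφ₂.le
  have hR : R ⊆ polarCoord.target := fun p ⟨h₁, h₂⟩ =>
    ⟨hr₁.trans_le h₁.1, ⟨hφ₁.trans_le h₂.1, h₂.2.trans_lt hφ₂⟩⟩
  calc ∫ w in S, G ‖w‖
      = ∫ p in polarCoord.target,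
          p.1 • S.indicator (fun w => G ‖w‖) (Complex.polarCoord.symm p) := by
        rw [Complex.integral_comp_polarCoord_symm,
          MeasureTheory.integral_indicator (measurableSet_polarRect ..)]
    _ = ∫ p in polarCoord.target, R.indicator (fun q : ℝ × ℝ => q.1 * G q.1) p := by
        refine setIntegral_congr_fun polarCoord.open_target.measurableSet fun p hp => ?_
        by_cases hpR : p ∈ R
        · rw [indicator_of_mem ((hRS p hp).2 hpR), indicator_of_mem hpR,
            Complex.norm_polarCoord_symm, abs_of_pos hp.1, smul_eq_mul]
        · rw [indicator_of_notMem (mt (hRS p hp).1 hpR), indicator_of_notMem hpR, smul_zero]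
    _ = ∫ p in R, p.1 * G p.1 := by
        rw [setIntegral_indicator (measurableSet_Icc.prod measurableSet_Icc),
          inter_eq_self_of_subset_right hR]
    _ = (φ₂ - φ₁) * ∫ ρ in r₁..r₂, ρ * G ρ := by
        have hprod := setIntegral_prod_mul (μ := volume) (ν := volume) (fun ρ => ρ * G ρ)
          (fun _ => (1 : ℝ)) (Icc r₁ r₂) (Icc φ₁ φ₂)
        simp only [mul_one] at hprod
        rw [Measure.volume_eq_prod, hprod, setIntegral_const, smul_eq_mul, mul_one,
          measureReal_def, Real.volume_Icc, ENNReal.toReal_ofReal (sub_nonneg.2 hφ),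
          integral_Icc_eq_integral_Ioc, ← intervalIntegral.integral_of_le hr, mul_comm]

theorem rotation_ofReal_mul_exp_mul_I (θ ρ φ : ℝ) :
    rotation (Circle.exp θ) ((ρ : ℂ) * Complex.exp (φ * Complex.I)) =
      ρ * Complex.exp ((φ + θ : ℝ) * Complex.I) := by
  rw [rotation_apply, Circle.coe_exp, mul_left_comm, ← Complex.exp_add]
  push_cast
  ring_nf

theorem preimage_rotation_polarRect (θ r₁ r₂ φ₁ φ₂ : ℝ) :
    rotation (Circle.exp θ) ⁻¹' polarRect r₁ r₂ φ₁ φ₂ = polarRect r₁ r₂ (φ₁ - θ) (φ₂ - θ) := by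
  ext w
  constructor
  · rintro ⟨ρ, φ, h₁, h₂, h₃, h₄, heq⟩
    refine ⟨ρ, φ - θ, h₁, h₂, by linarith, by linarith, (rotation (Circle.exp θ)).injective ?_⟩
    rw [heq, rotation_ofReal_mul_exp_mul_I, sub_add_cancel]
  · rintro ⟨ρ, ψ, h₁, h₂, h₃, h₄, rfl⟩
    exact ⟨ρ, ψ + θ, h₁, h₂, by linarith, by linarith, rotation_ofReal_mul_exp_mul_I θ ρ ψ⟩

theorem setIntegral_polarRect_comp_norm (G : ℝ → ℝ) {r₁ r₂ φ₁ φ₂ : ℝ} (hr₁ : 0 < r₁)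
    (hr : r₁ ≤ r₂) (hφ : φ₁ ≤ φ₂) (hφ2π : φ₂ - φ₁ < 2 * π) :
    ∫ w in polarRect r₁ r₂ φ₁ φ₂, G ‖w‖ = (φ₂ - φ₁) * ∫ ρ in r₁..r₂, ρ * G ρ := by
  -- rotate the sector so that it is symmetric about the positive real axis
  have he := ((rotation (Circle.exp ((φ₁ + φ₂) / 2))).measurePreserving.setIntegral_preimage_emb
    (rotation _).toHomeomorph.measurableEmbedding (fun w => G ‖w‖)
    (polarRect r₁ r₂ φ₁ φ₂)).symm
  simp only [LinearIsometryEquiv.norm_map, preimage_rotation_polarRect] at he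
  rw [he, setIntegral_polarRect_comp_norm_of_neg_pi_lt G hr₁ hr (by linarith) (by linarith)
    (by linarith)]
  ring_nf

theorem integral_dA (f : ℂ → ℝ) (s : Set ℂ) : ∫ w in s, f w ∂dA = π⁻¹ * ∫ w in s, f w := by
  rw [dA, Measure.restrict_smul, MeasureTheory.integral_smul_measure, ENNReal.toReal_inv,
    ENNReal.toReal_ofReal pi_pos.le, smul_eq_mul]

theorem angFrom_ofReal_mul_exp_mul_I (z : ℂ) {ρ φ : ℝ} (hρ : 0 < ρ)
    (hφ : φ ∈ Ico (theta z) (theta z + 2 * π)) :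
    angFrom z (ρ * Complex.exp (φ * Complex.I)) = φ := by
  rw [angFrom, Complex.arg_real_mul _ hρ, Complex.arg_exp_mul_I, toIcoMod_toIocMod,
    toIcoMod_eq_self]
  exact hφ

theorem norm_mem_Icc_and_angFrom_mem_Icc_of_mem_Bz {z ζ : ℂ} (hz : 0 < ‖z‖) (hζ : ζ ∈ Bz z) :
    ‖ζ‖ ∈ Icc ‖z‖ (1 - (1 - ‖z‖) / 2) ∧
      angFrom z ζ ∈ Icc (theta z) (theta z + π * (1 - ‖z‖)) := by
  obtain ⟨ρ, φ, h₁, h₂, h₃, h₄, rfl⟩ := hζ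
  have hπ : π * (1 - ‖z‖) < 2 * π := by nlinarith [pi_pos]
  rw [norm_ofReal_mul_exp_mul_I (hz.le.trans h₁),
    angFrom_ofReal_mul_exp_mul_I z (hz.trans_le h₁) ⟨h₃, by linarith⟩]
  exact ⟨⟨h₁, h₂⟩, h₃, h₄⟩

noncomputable def fExRadial (b β s : ℝ) : ℝ :=
  if s < 1 / 2 then 1 else 1 / (s * (1 - s) ^ (b - β)) * sin (1 / (1 - s) ^ b)

theorem fEx_eq_fExRadial (b β : ℝ) (ξ : ℂ) : fEx b β ξ = fExRadial b β ‖ξ‖ := rfl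

theorem integral_mul_fExRadial (b β : ℝ) {r ρ : ℝ} (hr : 1 / 2 ≤ r) (hrρ : r ≤ ρ) (hρ : ρ < 1) :
    ∫ s in r..ρ, s * fExRadial b β s =
      ∫ t in (1 - ρ)..(1 - r), sin (1 / t ^ b) * t ^ (β - b) := by
  rw [← intervalIntegral.integral_comp_sub_left (fun t => sin (1 / t ^ b) * t ^ (β - b)) 1]
  refine intervalIntegral.integral_congr fun s hs => ?_
  rw [uIcc_of_le hrρ] at hs
  have hs1 : 0 < 1 - s := by linarith [hs.2]
  have hs0 : 0 < s := by linarith [hs.1]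
  simp only [fExRadial, if_neg (not_lt.2 (hr.trans hs.1))]
  rw [show β - b = -(b - β) by ring, rpow_neg hs1.le]
  field_simp

theorem integral_Bzz_fEx (b β : ℝ) {z ζ : ℂ} (hz : 1 / 2 ≤ ‖z‖) (hz1 : ‖z‖ < 1)
    (hζ : ζ ∈ Bz z) :
    ∫ ξ in Bzz z ζ, fEx b β ξ ∂dA =
      (angFrom z ζ - theta z) / π *
        ∫ t in (1 - ‖ζ‖)..(1 - ‖z‖), sin (1 / t ^ b) * t ^ (β - b) := by
  obtain ⟨⟨hρ₁, hρ₂⟩, hφ₁, hφ₂⟩ := norm_mem_Icc_and_angFrom_mem_Icc_of_mem_Bz (by linarith) hζ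
  have hπ : π * (1 - ‖z‖) < 2 * π := by nlinarith [pi_pos]
  simp only [fEx_eq_fExRadial]
  rw [integral_dA, Bzz, setIntegral_polarRect_comp_norm _ (by linarith) hρ₁ hφ₁ (by linarith),
    integral_mul_fExRadial b β hz hρ₁ (by linarith)]
  ring

/-- For `b ≥ β > 0` and the example symbol `f = fEx b β`, there is a
constant `C > 0` such that for every `z = r e^{iθ} ∈ 𝔻` with `r ≥ 1/2` and every
`ζ ∈ B(z)`, `|∫_{B(z,ζ)} f dA| ≤ C (1-r)^{2+β}`. -/
theorem example_integral_bound (b β : ℝ) (hβ : 0 < β) (hbβ : β ≤ b) :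
    ∃ C > (0:ℝ), ∀ z : ℂ, 1 / 2 ≤ ‖z‖ → ‖z‖ < 1 → ∀ ζ ∈ Bz z,
      |∫ ξ in Bzz z ζ, fEx b β ξ ∂dA| ≤ C * (1 - ‖z‖) ^ (2 + β) := by
  have hb : 0 < b := hβ.trans_le hbβ
  refine ⟨2 / b, by positivity, fun z hz hz1 ζ hζ => ?_⟩
  obtain ⟨⟨hρ₁, hρ₂⟩, hφ₁, hφ₂⟩ := norm_mem_Icc_and_angFrom_mem_Icc_of_mem_Bz (by linarith) hζ
  have hI := abs_integral_sin_inv_rpow_mul_rpow_le b β hb (by linarith)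
    (by linarith : 0 < 1 - ‖ζ‖) (by linarith : 1 - ‖ζ‖ ≤ 1 - ‖z‖)
  rw [integral_Bzz_fEx b β hz hz1 hζ, abs_mul, abs_div, abs_of_nonneg (sub_nonneg.2 hφ₁),
    abs_of_pos pi_pos]
  calc (angFrom z ζ - theta z) / π *
        |∫ t in (1 - ‖ζ‖)..(1 - ‖z‖), sin (1 / t ^ b) * t ^ (β - b)|
      ≤ π * (1 - ‖z‖) / π * (2 / b * (1 - ‖z‖) ^ (β + 1)) := by
        gcongr
        linarith
    _ = 2 / b * (1 - ‖z‖) ^ (2 + β) := by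
        rw [mul_div_cancel_left₀ _ pi_ne_zero, show 2 + β = β + 1 + 1 by ring,
          rpow_add_one (by linarith) (β + 1)]
        ring
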